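/- arXiv:2303.12687 — 2 statements merged into one kernel-verified Lean document; each statement's English description precedes it below -/
import Mathlib

section
/- The propensity-score-weighted conditional treatment effect equals the treated-group conditional treatment effect: E[π(X)·(Y¹ − Y⁰) | σ(V)] = E[A·(Y¹ − Y⁰) | σ(V)] P-almost surely. -/
/-!
Let `B = {A = 1}`, so that `A = 1_B` and `P(B | X) = π(X)`. Conditional independence of `B` and
`σ(Y⁰, Y¹)` given `σ(X)` gives `P(s ∩ t ∩ B) = ∫_{s ∩ t} P(B | X) dP` for `s ∈ σ(X)` and
`t ∈ σ(Y⁰, Y¹)`; by the π-λ theorem the measures `P(· ∩ B)` and `P(B | X) · P` therefore agree on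
`σ(X) ∨ σ(Y⁰, Y¹)`. For `s ∈ σ(V) ⊆ σ(X)` the function `1_s (Y¹ - Y⁰)` is measurable for that
σ-algebra, and integrating it against both measures gives
`E[1_s A (Y¹ - Y⁰)] = E[1_s π(X) (Y¹ - Y⁰)]`.
-/

open MeasureTheory ProbabilityTheory Set

section PiSystem

variable {Ω : Type*} (m m' : MeasurableSpace Ω)

lemma isPiSystem_image2_inter_measurableSet :
    IsPiSystem (image2 (· ∩ ·) {s | MeasurableSet[m] s} {t | MeasurableSet[m'] t}) := by
  rintro _ ⟨s₁, hs₁, t₁, ht₁, rfl⟩ _ ⟨s₂, hs₂, t₂, ht₂, rfl⟩ -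
  exact ⟨s₁ ∩ s₂, hs₁.inter hs₂, t₁ ∩ t₂, ht₁.inter ht₂, inter_inter_inter_comm s₁ s₂ t₁ t₂⟩

lemma generateFrom_image2_inter_measurableSet :
    MeasurableSpace.generateFrom
      (image2 (· ∩ ·) {s | MeasurableSet[m] s} {t | MeasurableSet[m'] t}) = m ⊔ m' := by
  refine le_antisymm (MeasurableSpace.generateFrom_le ?_) (sup_le ?_ ?_)
  · rintro _ ⟨s, hs, t, ht, rfl⟩
    exact ((le_sup_left : m ≤ m ⊔ m') s hs).inter ((le_sup_right : m' ≤ m ⊔ m') t ht)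
  · intro s hs
    exact MeasurableSpace.measurableSet_generateFrom ⟨s, hs, univ, .univ, inter_univ s⟩
  · intro t ht
    exact MeasurableSpace.measurableSet_generateFrom ⟨univ, .univ, t, ht, univ_inter t⟩

end PiSystem

section ConditionalExpectation

variable {Ω : Type*} {m m' mB m₁ mΩ : MeasurableSpace Ω} {P : Measure Ω} {s t B : Set Ω}

lemma condExp_indicator_one_nonneg : 0 ≤ᵐ[P] P⟦B | m⟧ :=
  condExp_nonneg (.of_forall fun _ => indicator_nonneg (fun _ _ => zero_le_one) _)

lemma toReal_ofReal_condExp_indicator_one_ae_eq :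
    (fun ω => (ENNReal.ofReal ((P⟦B | m⟧) ω)).toReal) =ᵐ[P] P⟦B | m⟧ :=
  condExp_indicator_one_nonneg.mono fun _ h => ENNReal.toReal_ofReal h

lemma measureReal_inter_inter_eq_setIntegral_condExp [IsFiniteMeasure P] (hm : m ≤ mΩ)
    (hs : MeasurableSet[m] s) (ht : MeasurableSet t) (hB : MeasurableSet B)
    (hind : P⟦t ∩ B | m⟧ =ᵐ[P] P⟦t | m⟧ * P⟦B | m⟧) :
    P.real (s ∩ t ∩ B) = ∫ ω in s ∩ t, (P⟦B | m⟧) ω ∂P := by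
  have hpull : P[t.indicator (P⟦B | m⟧) | m] =ᵐ[P] P⟦t | m⟧ * P⟦B | m⟧ := by
    have hprod : t.indicator (fun _ => (1 : ℝ)) * P⟦B | m⟧ = t.indicator (P⟦B | m⟧) := by
      ext ω; by_cases hω : ω ∈ t <;> simp [hω]
    rw [← hprod]
    exact condExp_mul_of_stronglyMeasurable_right stronglyMeasurable_condExp
      (hprod ▸ integrable_condExp.indicator ht) ((integrable_const 1).indicator ht)
  calc P.real (s ∩ t ∩ B) = ∫ ω in s, (t ∩ B).indicator 1 ω ∂P := by
        rw [integral_indicator_one (ht.inter hB), measureReal_restrict_apply (ht.inter hB),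
          inter_comm (t ∩ B), inter_assoc]
    _ = ∫ ω in s, (P⟦t ∩ B | m⟧) ω ∂P :=
        (setIntegral_condExp hm ((integrable_const 1).indicator (ht.inter hB)) hs).symm
    _ = ∫ ω in s, (P[t.indicator (P⟦B | m⟧) | m]) ω ∂P :=
        setIntegral_congr_ae (hm s hs) ((hind.trans hpull.symm).mono fun _ h _ => h)
    _ = ∫ ω in s, t.indicator (P⟦B | m⟧) ω ∂P :=
        setIntegral_condExp hm (integrable_condExp.indicator ht) hs
    _ = ∫ ω in s ∩ t, (P⟦B | m⟧) ω ∂P := by rw [setIntegral_indicator ht]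

namespace ProbabilityTheory

section CondIndep

variable [StandardBorelSpace Ω] [IsFiniteMeasure P] {f : Ω → ℝ}
  (hm : m ≤ mΩ) (hm' : m' ≤ mΩ) (hmB : mB ≤ mΩ)
  (hind : CondIndep m m' mB hm P) (hB : MeasurableSet[mB] B)
include hm' hmB hind hB

lemma CondIndep.trim_restrict_eq_trim_withDensity_condExp :
    (P.restrict B).trim (sup_le hm hm')
      = (P.withDensity fun ω => ENNReal.ofReal ((P⟦B | m⟧) ω)).trim (sup_le hm hm') := by
  have hagree : ∀ u ∈ image2 (· ∩ ·) {s | MeasurableSet[m] s} {t | MeasurableSet[m'] t},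
      (P.restrict B).trim (sup_le hm hm') u
        = (P.withDensity fun ω => ENNReal.ofReal ((P⟦B | m⟧) ω)).trim (sup_le hm hm') u := by
    rintro _ ⟨s, hs, t, ht, rfl⟩
    have hst : MeasurableSet[m ⊔ m'] (s ∩ t) :=
      ((le_sup_left : m ≤ m ⊔ m') s hs).inter ((le_sup_right : m' ≤ m ⊔ m') t ht)
    rw [trim_measurableSet_eq _ hst, trim_measurableSet_eq _ hst,
      Measure.restrict_apply (sup_le hm hm' _ hst), withDensity_apply _ (sup_le hm hm' _ hst),
      ← ofReal_measureReal, ← ofReal_integral_eq_lintegral_ofReal integrable_condExp.integrableOn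
        (ae_restrict_of_ae condExp_indicator_one_nonneg),
      measureReal_inter_inter_eq_setIntegral_condExp hm hs (hm' t ht) (hmB B hB)
        ((condIndep_iff m m' mB hm hm' hmB P).1 hind t B ht hB)]
  exact ext_of_generate_finite _ (generateFrom_image2_inter_measurableSet m m').symm
    (isPiSystem_image2_inter_measurableSet m m') hagree
    (hagree univ ⟨univ, .univ, univ, .univ, inter_univ univ⟩)

lemma CondIndep.integrable_restrict_iff_integrable_condExp_mul
    (hf : StronglyMeasurable[m ⊔ m'] f) :
    Integrable f (P.restrict B) ↔ Integrable (fun ω => (P⟦B | m⟧) ω * f ω) P := by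
  have hdens : Measurable fun ω => ENNReal.ofReal ((P⟦B | m⟧) ω) :=
    (stronglyMeasurable_condExp.measurable.mono hm le_rfl).ennreal_ofReal
  have htrim := hind.trim_restrict_eq_trim_withDensity_condExp hm hm' hmB hB
  calc Integrable f (P.restrict B)
      ↔ Integrable f ((P.restrict B).trim (sup_le hm hm')) :=
        ⟨fun hfi => hfi.trim _ hf, integrable_of_integrable_trim _⟩
    _ ↔ Integrable f (P.withDensity fun ω => ENNReal.ofReal ((P⟦B | m⟧) ω)) := by
        rw [htrim]; exact ⟨integrable_of_integrable_trim _, fun hfi => hfi.trim _ hf⟩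
    _ ↔ Integrable (fun ω => (ENNReal.ofReal ((P⟦B | m⟧) ω)).toReal • f ω) P :=
        integrable_withDensity_iff_integrable_smul' hdens
          (.of_forall fun _ => ENNReal.ofReal_lt_top)
    _ ↔ Integrable (fun ω => (P⟦B | m⟧) ω * f ω) P :=
        integrable_congr (toReal_ofReal_condExp_indicator_one_ae_eq.mul .rfl)

lemma CondIndep.setIntegral_eq_integral_condExp_mul (hf : StronglyMeasurable[m ⊔ m'] f) :
    ∫ ω in B, f ω ∂P = ∫ ω, (P⟦B | m⟧) ω * f ω ∂P := by
  have hdens : Measurable fun ω => ENNReal.ofReal ((P⟦B | m⟧) ω) :=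
    (stronglyMeasurable_condExp.measurable.mono hm le_rfl).ennreal_ofReal
  rw [integral_trim (sup_le hm hm') hf,
    hind.trim_restrict_eq_trim_withDensity_condExp hm hm' hmB hB, ← integral_trim _ hf,
    integral_withDensity_eq_integral_toReal_smul hdens (.of_forall fun _ => ENNReal.ofReal_lt_top)]
  exact integral_congr_ae (toReal_ofReal_condExp_indicator_one_ae_eq.mul .rfl)

lemma CondIndep.condExp_indicator_ae_eq_condExp_mul (hm₁ : m₁ ≤ m)
    (hf : StronglyMeasurable[m ⊔ m'] f) (hfi : Integrable (B.indicator f) P) :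
    P[B.indicator f | m₁] =ᵐ[P] P[fun ω => (P⟦B | m⟧) ω * f ω | m₁] := by
  have hB' : MeasurableSet B := hmB B hB
  have hint : Integrable (fun ω => (P⟦B | m⟧) ω * f ω) P :=
    (hind.integrable_restrict_iff_integrable_condExp_mul hm hm' hmB hB hf).1
      ((integrable_indicator_iff hB').1 hfi)
  refine ae_eq_condExp_of_forall_setIntegral_eq (hm₁.trans hm) hint
    (fun _ _ _ => integrable_condExp.integrableOn) (fun s hs _ => ?_)
    stronglyMeasurable_condExp.aestronglyMeasurable
  have hs' : MeasurableSet s := hm s (hm₁ s hs)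
  have hsf : StronglyMeasurable[m ⊔ m'] (s.indicator f) :=
    hf.indicator ((hm₁.trans le_sup_left) s hs)
  calc ∫ ω in s, (P[B.indicator f | m₁]) ω ∂P = ∫ ω in s, B.indicator f ω ∂P :=
        setIntegral_condExp (hm₁.trans hm) hfi hs
    _ = ∫ ω in B, s.indicator f ω ∂P := by
        rw [setIntegral_indicator hB', setIntegral_indicator hs', inter_comm]
    _ = ∫ ω, (P⟦B | m⟧) ω * s.indicator f ω ∂P :=
        hind.setIntegral_eq_integral_condExp_mul hm hm' hmB hB hsf
    _ = ∫ ω in s, (P⟦B | m⟧) ω * f ω ∂P := by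
        rw [← integral_indicator hs']
        congr 1; ext ω; exact (indicator_mul_right _ _ _).symm

end CondIndep

end ProbabilityTheory

end ConditionalExpectation

theorem stmt15_general {Ω 𝓧 𝓥 : Type*} [MeasurableSpace Ω] [StandardBorelSpace Ω]
    [MeasurableSpace 𝓧] [MeasurableSpace 𝓥]
    (P : Measure Ω) [IsProbabilityMeasure P]
    (X : Ω → 𝓧) (hX : Measurable X) (v : 𝓧 → 𝓥) (hv : Measurable v)
    (A Y0 Y1 : Ω → ℝ) (hA : Measurable A) (hY0 : Measurable Y0) (hY1 : Measurable Y1)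
    (hA01 : ∀ ω, A ω = 0 ∨ A ω = 1)
    (pr : 𝓧 → ℝ)
    (hprCE : (fun ω => pr (X ω)) =ᵐ[P] P[A | MeasurableSpace.comap X inferInstance])
    (hCE : CondIndepFun (MeasurableSpace.comap X inferInstance) hX.comap_le
      (fun ω => (Y0 ω, Y1 ω)) A P)
    (hI2 : Integrable (fun ω => A ω * (Y1 ω - Y0 ω)) P) :
    P[fun ω => pr (X ω) * (Y1 ω - Y0 ω) |
        MeasurableSpace.comap (fun ω => v (X ω)) inferInstance]
      =ᵐ[P]
    P[fun ω => A ω * (Y1 ω - Y0 ω) |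
        MeasurableSpace.comap (fun ω => v (X ω)) inferInstance] := by
  set B := A ⁻¹' {1}
  have hind := (condIndepFun_iff_condIndep _ _ _ _ _).1 hCE
  have hVX : MeasurableSpace.comap (fun ω => v (X ω)) inferInstance
      ≤ MeasurableSpace.comap X inferInstance :=
    (hv.comp (comap_measurable X)).comap_le
  have heffect : StronglyMeasurable[MeasurableSpace.comap X inferInstance
      ⊔ MeasurableSpace.comap (fun ω => (Y0 ω, Y1 ω)) inferInstance] fun ω => Y1 ω - Y0 ω :=
    ((measurable_snd.sub measurable_fst).comp
      (comap_measurable fun ω => (Y0 ω, Y1 ω))).stronglyMeasurable.mono le_sup_right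
  have hAB : A = B.indicator fun _ => 1 := by
    ext ω; rcases hA01 ω with h | h <;> simp [B, h]
  have hAh : (fun ω => A ω * (Y1 ω - Y0 ω)) = B.indicator fun ω => Y1 ω - Y0 ω := by
    ext ω; rcases hA01 ω with h | h <;> simp [B, h]
  have hpropensity : P⟦B | MeasurableSpace.comap X inferInstance⟧ =ᵐ[P] fun ω => pr (X ω) :=
    hAB ▸ hprCE.symm
  calc P[fun ω => pr (X ω) * (Y1 ω - Y0 ω) | _]
      =ᵐ[P] P[fun ω => (P⟦B | MeasurableSpace.comap X inferInstance⟧) ω * (Y1 ω - Y0 ω) | _] :=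
        condExp_congr_ae (hpropensity.mono fun ω hω => by simp only [hω])
    _ =ᵐ[P] P[B.indicator fun ω => Y1 ω - Y0 ω | _] :=
        (hind.condExp_indicator_ae_eq_condExp_mul hX.comap_le (hY0.prodMk hY1).comap_le
          hA.comap_le ⟨{1}, measurableSet_singleton 1, rfl⟩ hVX heffect (hAh ▸ hI2)).symm
    _ = P[fun ω => A ω * (Y1 ω - Y0 ω) | _] := by rw [hAh]

/-- the propensity-score-weighted conditional treatment effect equals the
treated-group conditional treatment effect:
`E[π(X)(Y¹−Y⁰) | σ(V)] = E[A(Y¹−Y⁰) | σ(V)]` a.s. -/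
theorem stmt15 {Ω 𝓧 𝓥 : Type*} [MeasurableSpace Ω] [StandardBorelSpace Ω]
    [MeasurableSpace 𝓧] [MeasurableSpace 𝓥]
    (P : Measure Ω) [IsProbabilityMeasure P]
    (X : Ω → 𝓧) (hX : Measurable X) (v : 𝓧 → 𝓥) (hv : Measurable v)
    (A Y0 Y1 : Ω → ℝ) (hA : Measurable A) (hY0 : Measurable Y0) (hY1 : Measurable Y1)
    (hA01 : ∀ ω, A ω = 0 ∨ A ω = 1)
    (pr : 𝓧 → ℝ) (hprm : Measurable pr) (hpr : ∀ x, 0 < pr x ∧ pr x < 1)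
    (hprCE : (fun ω => pr (X ω)) =ᵐ[P] P[A | MeasurableSpace.comap X inferInstance])
    (hCE : CondIndepFun (MeasurableSpace.comap X inferInstance) hX.comap_le
      (fun ω => (Y0 ω, Y1 ω)) A P)
    (hI1 : Integrable (fun ω => pr (X ω) * (Y1 ω - Y0 ω)) P)
    (hI2 : Integrable (fun ω => A ω * (Y1 ω - Y0 ω)) P) :
    P[fun ω => pr (X ω) * (Y1 ω - Y0 ω) |
        MeasurableSpace.comap (fun ω => v (X ω)) inferInstance]
      =ᵐ[P]
    P[fun ω => A ω * (Y1 ω - Y0 ω) |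
        MeasurableSpace.comap (fun ω => v (X ω)) inferInstance] :=
  stmt15_general P X hX v hv A Y0 Y1 hA hY0 hY1 hA01 pr hprCE hCE hI2
end

section
/- Oracle error bound (Theorem 1). Let g*, ĝ : 𝒱 → ℝ be measurable, let η₀ := (π, Q⁰, Q¹) be the true nuisance parameters, and let η̂ := (π̂, Q̂⁰, Q̂¹) be measurable functions 𝒳 → ℝ with 0 < π̂(x) < 1 for all x. For a nuisance triple η = (p, q⁰, q¹) write w_η := (A − p(X))·λ'(p(X)) + λ(p(X)), φ_η := (λ(p(X))/w_η)·[(A/p(X))·(Y − q¹(X)) − ((1−A)/(1−p(X)))·(Y − q⁰(X))] + q¹(X) − q⁰(X), L(g, η) := E[w_η·(φ_η − g(V))²], η_t := η₀ + t·(η̂ − η₀) componentwise, and ‖h‖² := E[h(V)²]. Define the random variables c₁(η) := λ(p(X))·[(A/p(X)³)(Y−q¹(X)) − ((1−A)/(1−p(X))³)(Y−q⁰(X))] − λ'(p(X))·[(A/p(X)²)(Y−q¹(X)) + ((1−A)/(1−p(X))²)(Y−q⁰(X))] + ½λ''(p(X))·[(A/p(X))(Y−q¹(X)) − ((1−A)/(1−p(X)))(Y−q⁰(X))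 − q¹(X) + q⁰(X) + g*(V)] + ½λ'''(p(X))·(A−p(X))·(q¹(X)−q⁰(X)−g*(V)); c₂(η) := λ(p(X))·A/p(X)² − λ'(p(X))·A/p(X) + (A−p(X))·λ''(p(X)); c₃(η) := λ(p(X))·(1−A)/(1−p(X))² + λ'(p(X))·(1−A)/(1−p(X)) − (A−p(X))·λ''(p(X)). Assume: (a) w_{η̂} ≠ 0 a.s. and w_{η₀} ≠ 0 a.s. and all expectations appearing below are finite; (b) first-order optimality of g*: F(0) ≤ 0, where F(t) := E[(λ(π_t(X))·[(A/π_t(X))(Y−Q¹_t(X)) − ((1−A)/(1−π_t(X)))(Y−Q⁰_t(X))] + w_{η_t}·(Q¹_t(X)−Q⁰_t(X)−g*(V)))·(ĝ(V)−g*(V))] and (π_t, Q⁰_t, Q¹_t) := η_t (so that −2F(t) is the directional derivative of L(·, η_t) at g* in the direction ĝ − g*); (c) there is α ≥ 0 with E[w_{η̂}·(ĝ(V)−g*(V))²] ≥ (α/2)·‖ĝ−g*‖²; (d) F is continuous on [0,1], differentiable on [0,1) with F'(0) = 0, twice differentiable on (0,1), and for every t ∈ (0,1), F''(t) = 2·E[c₁(η_t)·(π̂(X)−π(X))²·(ĝ(V)−g*(V))]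 + 2·E[c₂(η_t)·(π̂(X)−π(X))·(Q̂¹(X)−Q¹(X))·(ĝ(V)−g*(V))] + 2·E[c₃(η_t)·(π̂(X)−π(X))·(Q̂⁰(X)−Q⁰(X))·(ĝ(V)−g*(V))] (differentiation under the integral sign). Then for all δ₁, δ₂, δ₃ > 0 with δ₁ + δ₂ + δ₃ < α/2, there exists t̄ ∈ (0,1) such that, with R_g := L(ĝ, η̂) − L(g*, η̂), ‖ĝ − g*‖² ≤ (α/2 − δ₁ − δ₂ − δ₃)⁻¹·( R_g + (1/δ₁)·E[c₁(η_{t̄})²·(π̂(X)−π(X))⁴] + (1/δ₂)·E[c₂(η_{t̄})²·(π̂(X)−π(X))²·(Q̂¹(X)−Q¹(X))²] + (1/δ₃)·E[c₃(η_{t̄})²·(π̂(X)−π(X))²·(Q̂⁰(X)−Q⁰(X))²] ). -/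
open MeasureTheory ProbabilityTheory

/-- The weight `w_η = (A − p(X))·λ'(p(X)) + λ(p(X))` for nuisance propensity score `p`. -/
noncomputable def wFun {Ω 𝓧 : Type*} (lam lam' : ℝ → ℝ) (A : Ω → ℝ) (X : Ω → 𝓧)
    (p : 𝓧 → ℝ) (ω : Ω) : ℝ :=
  (A ω - p (X ω)) * lam' (p (X ω)) + lam (p (X ω))

/-- The pseudo-outcome
`φ_η = (λ(p(X))/w_η)·[(A/p(X))(Y − q¹(X)) − ((1−A)/(1−p(X)))(Y − q⁰(X))] + q¹(X) − q⁰(X)`. -/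
noncomputable def phiFun {Ω 𝓧 : Type*} (lam lam' : ℝ → ℝ) (A Y : Ω → ℝ) (X : Ω → 𝓧)
    (p q0 q1 : 𝓧 → ℝ) (ω : Ω) : ℝ :=
  lam (p (X ω)) / wFun lam lam' A X p ω *
      (A ω / p (X ω) * (Y ω - q1 (X ω)) - (1 - A ω) / (1 - p (X ω)) * (Y ω - q0 (X ω)))
    + q1 (X ω) - q0 (X ω)

/-- The componentwise nuisance path `f + t·(g − f)`. -/
noncomputable def pathFun {𝓧 : Type*} (f g : 𝓧 → ℝ) (t : ℝ) : 𝓧 → ℝ :=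
  fun x => f x + t * (g x - f x)

/-- The random variable `c₁(η)` of Theorem 1. -/
noncomputable def c1Fun {Ω 𝓧 𝓥 : Type*} (lam lam' lam'' lam''' : ℝ → ℝ) (A Y : Ω → ℝ)
    (X : Ω → 𝓧) (v : 𝓧 → 𝓥) (gstar : 𝓥 → ℝ) (p q0 q1 : 𝓧 → ℝ) (ω : Ω) : ℝ :=
  lam (p (X ω)) * (A ω / p (X ω) ^ 3 * (Y ω - q1 (X ω))
      - (1 - A ω) / (1 - p (X ω)) ^ 3 * (Y ω - q0 (X ω)))
    - lam' (p (X ω)) * (A ω / p (X ω) ^ 2 * (Y ω - q1 (X ω))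
      + (1 - A ω) / (1 - p (X ω)) ^ 2 * (Y ω - q0 (X ω)))
    + 1 / 2 * lam'' (p (X ω)) * (A ω / p (X ω) * (Y ω - q1 (X ω))
      - (1 - A ω) / (1 - p (X ω)) * (Y ω - q0 (X ω))
      - q1 (X ω) + q0 (X ω) + gstar (v (X ω)))
    + 1 / 2 * lam''' (p (X ω)) * (A ω - p (X ω)) * (q1 (X ω) - q0 (X ω) - gstar (v (X ω)))

/-- The random variable `c₂(η)` of Theorem 1. -/
noncomputable def c2Fun {Ω 𝓧 : Type*} (lam lam' lam'' : ℝ → ℝ) (A : Ω → ℝ)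
    (X : Ω → 𝓧) (p : 𝓧 → ℝ) (ω : Ω) : ℝ :=
  lam (p (X ω)) * A ω / p (X ω) ^ 2 - lam' (p (X ω)) * A ω / p (X ω)
    + (A ω - p (X ω)) * lam'' (p (X ω))

/-- The random variable `c₃(η)` of Theorem 1. -/
noncomputable def c3Fun {Ω 𝓧 : Type*} (lam lam' lam'' : ℝ → ℝ) (A : Ω → ℝ)
    (X : Ω → 𝓧) (p : 𝓧 → ℝ) (ω : Ω) : ℝ :=
  lam (p (X ω)) * (1 - A ω) / (1 - p (X ω)) ^ 2 + lam' (p (X ω)) * (1 - A ω) / (1 - p (X ω))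
    - (A ω - p (X ω)) * lam'' (p (X ω))

/-!
Along the nuisance path `η_t`, the one-sided Taylor bound
`F 1 ≤ F 0 + F' 0 + F'' t̄ / 2 ≤ F'' t̄ / 2` holds for some `t̄ ∈ (0, 1)`. At `t = 1` the integrand
of `F` is `w_η̂ (φ_η̂ − g*) (ĝ − g*)`, so expanding the square in `R_g` gives
`E[w_η̂ (ĝ − g*)²] = R_g + 2 F 1`. The curvature assumption bounds the left side below by
`(α/2) ‖ĝ − g*‖²`, and Young's inequality `2xy ≤ x²/δ + δ y²` splits each of the three terms of
`F'' t̄` into a nuisance term and `δₖ ‖ĝ − g*‖²`, which is absorbed on the left.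
-/

open Set Filter

theorem hasDerivAt_of_forall_hasDerivWithinAt_Ici {f f' : ℝ → ℝ} {s : Set ℝ} (hs : IsOpen s)
    (hf : ContinuousOn f s) (hf' : ∀ x ∈ s, HasDerivWithinAt f (f' x) (Ici x) x)
    (hf'c : ContinuousOn f' s) {x : ℝ} (hx : x ∈ s) : HasDerivAt f (f' x) x := by
  obtain ⟨l, u, hxlu, hlus⟩ := mem_nhds_iff_exists_Ioo_subset.mp (hs.mem_nhds hx)
  have hftc : ∀ r ∈ Ioo l u, f r = f x + ∫ y in x..r, f' y := by
    intro r hr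
    have hsub : uIcc x r ⊆ s := (ordConnected_Ioo.uIcc_subset hxlu hr).trans hlus
    rw [intervalIntegral.integral_eq_sub_of_hasDeriv_right (hf.mono hsub)
      (fun y hy => (hf' y (hsub (Ioo_subset_Icc_self hy))).mono Ioi_subset_Ici_self)
      ((hf'c.mono hsub).intervalIntegrable)]
    ring
  have hint : HasDerivAt (fun r => f x + ∫ y in x..r, f' y) (f' x) x :=
    (intervalIntegral.integral_hasDerivAt_right IntervalIntegrable.refl
      (hf'c.stronglyMeasurableAtFilter hs x hx) (hf'c.continuousAt (hs.mem_nhds hx))).const_add _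
  exact hint.congr_of_eventuallyEq (eventually_of_mem (isOpen_Ioo.mem_nhds hxlu) hftc)

theorem strictConcaveOn_Icc_of_hasDerivWithinAt_Ici {G G' G'' : ℝ → ℝ} {a b : ℝ}
    (hG : ContinuousOn G (Icc a b)) (hG' : ∀ t ∈ Ioo a b, HasDerivWithinAt G (G' t) (Ici t) t)
    (hG'' : ∀ t ∈ Ioo a b, HasDerivAt G' (G'' t) t) (hneg : ∀ t ∈ Ioo a b, G'' t < 0) :
    StrictConcaveOn ℝ (Icc a b) G := by
  have hG'c : ContinuousOn G' (Ioo a b) := fun t ht =>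
    (hG'' t ht).continuousAt.continuousWithinAt
  have hGd : ∀ t ∈ Ioo a b, HasDerivAt G (G' t) t := fun t =>
    hasDerivAt_of_forall_hasDerivWithinAt_Ici isOpen_Ioo (hG.mono Ioo_subset_Icc_self) hG' hG'c
  refine StrictAntiOn.strictConcaveOn_of_deriv (convex_Icc a b) hG ?_
  rw [interior_Icc]
  refine (strictAntiOn_of_hasDerivWithinAt_neg (f' := G'') (convex_Ioo a b) hG'c ?_ ?_).congr
    fun t ht => ((hGd t ht).deriv).symm
  · simpa only [interior_Ioo] using fun t ht => (hG'' t ht).hasDerivWithinAt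
  · simpa only [interior_Ioo] using hneg

theorem exists_taylor_remainder_le {F F' F'' : ℝ → ℝ} {a b : ℝ} (hab : a < b)
    (hF : ContinuousOn F (Icc a b))
    (hF' : ∀ t ∈ Ico a b, HasDerivWithinAt F (F' t) (Ici t) t)
    (hF'' : ∀ t ∈ Ioo a b, HasDerivAt F' (F'' t) t) :
    ∃ t ∈ Ioo a b, F b - F a - F' a * (b - a) ≤ F'' t / 2 * (b - a) ^ 2 := by
  set K := (F b - F a - F' a * (b - a)) / (b - a) ^ 2
  have hK : K * (b - a) ^ 2 = F b - F a - F' a * (b - a) := div_mul_cancel₀ _ (by positivity)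
  by_contra! hlt
  -- `F - q` vanishes at both ends with right derivative `0` at `a`, and is strictly concave
  -- since `F'' < 2 K = q''`; but then its secant slope on `[a, b]` would be negative.
  set q : ℝ → ℝ := fun t => F a + F' a * (t - a) + K * (t - a) ^ 2
  have hlin : ∀ t, HasDerivAt (fun t => t - a) 1 t := fun t => (hasDerivAt_id t).sub_const a
  have hq : ∀ t, HasDerivAt q (F' a + 2 * K * (t - a)) t := fun t =>
    (((hlin t).const_mul (F' a)).const_add (F a)).add (((hlin t).pow 2).const_mul K)
      |>.congr_deriv (by ring)
  have hq' : ∀ t, HasDerivAt (fun t => F' a + 2 * K * (t - a)) (2 * K) t := fun t =>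
    (((hlin t).const_mul (2 * K)).const_add (F' a)).congr_deriv (mul_one _)
  have hconc : StrictConcaveOn ℝ (Icc a b) (F - q) :=
    strictConcaveOn_Icc_of_hasDerivWithinAt_Ici
      (hF.sub fun t _ => (hq t).continuousAt.continuousWithinAt)
      (fun t ht => (hF' t (Ioo_subset_Ico_self ht)).sub (hq t).hasDerivWithinAt)
      (fun t ht => (hF'' t ht).sub (hq' t))
      (fun t ht => by
        have := lt_of_mul_lt_mul_right (hK ▸ hlt t ht) (sq_nonneg _)
        linarith)
  have hright : HasDerivWithinAt (F - q) 0 (Ioi a) a := by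
    simpa using ((hF' a (left_mem_Ico.2 hab)).sub (hq a).hasDerivWithinAt).mono Ioi_subset_Ici_self
  have := hconc.slope_lt_of_hasDerivWithinAt_Ioi (left_mem_Icc.2 hab.le) (right_mem_Icc.2 hab.le)
    hab hright
  simp [slope_def_field, q, hK] at this

theorem two_mul_le_one_div_mul_sq_add_mul_sq {δ : ℝ} (hδ : 0 < δ) (a b : ℝ) :
    2 * a * b ≤ 1 / δ * a ^ 2 + δ * b ^ 2 := by
  have hsq : 0 ≤ (a - δ * b) ^ 2 / δ := by positivity
  have hexp : (a - δ * b) ^ 2 / δ = 1 / δ * a ^ 2 + δ * b ^ 2 - 2 * a * b := by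
    field_simp
    ring
  linarith

section Integral

variable {Ω : Type*} [MeasurableSpace Ω] {μ : Measure Ω}

theorem two_mul_integral_mul_le {δ : ℝ} (hδ : 0 < δ) {f g : Ω → ℝ}
    (hfg : Integrable (fun ω => f ω * g ω) μ) (hf : Integrable (fun ω => f ω ^ 2) μ)
    (hg : Integrable (fun ω => g ω ^ 2) μ) :
    2 * ∫ ω, f ω * g ω ∂μ ≤ 1 / δ * ∫ ω, f ω ^ 2 ∂μ + δ * ∫ ω, g ω ^ 2 ∂μ := by
  rw [← integral_const_mul, ← integral_const_mul, ← integral_const_mul,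
    ← integral_add (hf.const_mul _) (hg.const_mul _)]
  refine integral_mono (hfg.const_mul 2) ((hf.const_mul _).add (hg.const_mul _)) fun ω => ?_
  simpa only [mul_assoc] using two_mul_le_one_div_mul_sq_add_mul_sq hδ (f ω) (g ω)

theorem integral_mul_sub_sq_sub_integral_mul_sub_sq {w φ a b : Ω → ℝ}
    (ha : Integrable (fun ω => w ω * (φ ω - a ω) ^ 2) μ)
    (hb : Integrable (fun ω => w ω * (φ ω - b ω) ^ 2) μ)
    (hab : Integrable (fun ω => w ω * (a ω - b ω) ^ 2) μ) :
    ∫ ω, w ω * (φ ω - a ω) ^ 2 ∂μ - ∫ ω, w ω * (φ ω - b ω) ^ 2 ∂μ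
      = ∫ ω, w ω * (a ω - b ω) ^ 2 ∂μ - 2 * ∫ ω, w ω * (φ ω - b ω) * (a ω - b ω) ∂μ := by
  have hcross : (fun ω => w ω * (φ ω - b ω) * (a ω - b ω))
      = fun ω => (w ω * (φ ω - b ω) ^ 2 + w ω * (a ω - b ω) ^ 2 - w ω * (φ ω - a ω) ^ 2) / 2 := by
    funext ω
    ring
  have hsum : Integrable (fun ω => w ω * (φ ω - b ω) ^ 2 + w ω * (a ω - b ω) ^ 2) μ := hb.add hab
  rw [hcross, integral_div, integral_sub hsum ha, integral_add hb hab]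
  ring

end Integral

@[simp]
theorem pathFun_one {𝓧 : Type*} (f g : 𝓧 → ℝ) : pathFun f g 1 = g := by
  ext
  simp [pathFun]

section Weights

variable {Ω 𝓧 : Type*} {lam lam' : ℝ → ℝ} {A Y : Ω → ℝ} {X : Ω → 𝓧} {p q0 q1 : 𝓧 → ℝ}

theorem wFun_mul_phiFun_sub {ω : Ω} (hw : wFun lam lam' A X p ω ≠ 0) (c : ℝ) :
    wFun lam lam' A X p ω * (phiFun lam lam' A Y X p q0 q1 ω - c)
      = lam (p (X ω)) * (A ω / p (X ω) * (Y ω - q1 (X ω))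
          - (1 - A ω) / (1 - p (X ω)) * (Y ω - q0 (X ω)))
        + wFun lam lam' A X p ω * (q1 (X ω) - q0 (X ω) - c) := by
  rw [phiFun]
  field_simp
  ring

theorem integral_wFun_mul_phiFun_sub_mul [MeasurableSpace Ω] {μ : Measure Ω}
    (hw : ∀ᵐ ω ∂μ, wFun lam lam' A X p ω ≠ 0) (c d : Ω → ℝ) :
    ∫ ω, (lam (p (X ω)) * (A ω / p (X ω) * (Y ω - q1 (X ω))
          - (1 - A ω) / (1 - p (X ω)) * (Y ω - q0 (X ω)))
        + wFun lam lam' A X p ω * (q1 (X ω) - q0 (X ω) - c ω)) * d ω ∂μ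
      = ∫ ω, wFun lam lam' A X p ω * (phiFun lam lam' A Y X p q0 q1 ω - c ω) * d ω ∂μ :=
  integral_congr_ae (hw.mono fun ω hω => by dsimp only; rw [wFun_mul_phiFun_sub hω])

end Weights

theorem stmt19_general {Ω 𝓧 𝓥 : Type*} [MeasurableSpace Ω] (P : Measure Ω)
    (X : Ω → 𝓧) (v : 𝓧 → 𝓥) (A Y : Ω → ℝ) (pr : 𝓧 → ℝ) (Q0 Q1 : 𝓧 → ℝ)
    (lam lam' lam'' lam''' : ℝ → ℝ)
    -- target parameters and estimated nuisance parameters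
    (gstar ghat : 𝓥 → ℝ)
    (prHat Q0Hat Q1Hat : 𝓧 → ℝ)
    -- (a) nondegenerate weights and integrability
    (hwhat : ∀ᵐ ω ∂P, wFun lam lam' A X prHat ω ≠ 0)
    (hIrisk1 : Integrable (fun ω => wFun lam lam' A X prHat ω *
      (phiFun lam lam' A Y X prHat Q0Hat Q1Hat ω - ghat (v (X ω))) ^ 2) P)
    (hIrisk2 : Integrable (fun ω => wFun lam lam' A X prHat ω *
      (phiFun lam lam' A Y X prHat Q0Hat Q1Hat ω - gstar (v (X ω))) ^ 2) P)
    (hInorm : Integrable (fun ω => (ghat (v (X ω)) - gstar (v (X ω))) ^ 2) P)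
    (hIcurv : Integrable (fun ω => wFun lam lam' A X prHat ω *
      (ghat (v (X ω)) - gstar (v (X ω))) ^ 2) P)
    (hIC1 : ∀ t ∈ Set.Icc (0 : ℝ) 1, Integrable (fun ω =>
      (c1Fun lam lam' lam'' lam''' A Y X v gstar
          (pathFun pr prHat t) (pathFun Q0 Q0Hat t) (pathFun Q1 Q1Hat t) ω) ^ 2
        * (prHat (X ω) - pr (X ω)) ^ 4) P)
    (hIC2 : ∀ t ∈ Set.Icc (0 : ℝ) 1, Integrable (fun ω =>
      (c2Fun lam lam' lam'' A X (pathFun pr prHat t) ω) ^ 2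
        * (prHat (X ω) - pr (X ω)) ^ 2 * (Q1Hat (X ω) - Q1 (X ω)) ^ 2) P)
    (hIC3 : ∀ t ∈ Set.Icc (0 : ℝ) 1, Integrable (fun ω =>
      (c3Fun lam lam' lam'' A X (pathFun pr prHat t) ω) ^ 2
        * (prHat (X ω) - pr (X ω)) ^ 2 * (Q0Hat (X ω) - Q0 (X ω)) ^ 2) P)
    (hID1 : ∀ t ∈ Set.Icc (0 : ℝ) 1, Integrable (fun ω =>
      c1Fun lam lam' lam'' lam''' A Y X v gstar
          (pathFun pr prHat t) (pathFun Q0 Q0Hat t) (pathFun Q1 Q1Hat t) ω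
        * (prHat (X ω) - pr (X ω)) ^ 2 * (ghat (v (X ω)) - gstar (v (X ω)))) P)
    (hID2 : ∀ t ∈ Set.Icc (0 : ℝ) 1, Integrable (fun ω =>
      c2Fun lam lam' lam'' A X (pathFun pr prHat t) ω
        * (prHat (X ω) - pr (X ω)) * (Q1Hat (X ω) - Q1 (X ω))
        * (ghat (v (X ω)) - gstar (v (X ω)))) P)
    (hID3 : ∀ t ∈ Set.Icc (0 : ℝ) 1, Integrable (fun ω =>
      c3Fun lam lam' lam'' A X (pathFun pr prHat t) ω
        * (prHat (X ω) - pr (X ω)) * (Q0Hat (X ω) - Q0 (X ω))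
        * (ghat (v (X ω)) - gstar (v (X ω)))) P)
    -- the (−1/2 times) directional derivative of the risk in `g` along the nuisance path
    (F F' : ℝ → ℝ)
    (hFdef : ∀ t : ℝ, F t = ∫ ω,
      (lam (pathFun pr prHat t (X ω)) *
          (A ω / pathFun pr prHat t (X ω) * (Y ω - pathFun Q1 Q1Hat t (X ω))
            - (1 - A ω) / (1 - pathFun pr prHat t (X ω)) * (Y ω - pathFun Q0 Q0Hat t (X ω)))
        + wFun lam lam' A X (pathFun pr prHat t) ω *
          (pathFun Q1 Q1Hat t (X ω) - pathFun Q0 Q0Hat t (X ω) - gstar (v (X ω))))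
        * (ghat (v (X ω)) - gstar (v (X ω))) ∂P)
    -- (b) first-order optimality of g* at the true nuisance parameters
    (hF0 : F 0 ≤ 0)
    -- (c) curvature
    (α : ℝ)
    (hcurv : α / 2 * ∫ ω, (ghat (v (X ω)) - gstar (v (X ω))) ^ 2 ∂P
      ≤ ∫ ω, wFun lam lam' A X prHat ω * (ghat (v (X ω)) - gstar (v (X ω))) ^ 2 ∂P)
    -- (d) smoothness of F with F'(0) = 0 and second derivative given by
    -- differentiation under the integral sign
    (hFcont : ContinuousOn F (Set.Icc 0 1))
    (hF' : ∀ t ∈ Set.Ico (0 : ℝ) 1, HasDerivWithinAt F (F' t) (Set.Ici t) t)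
    (hF'0 : F' 0 = 0)
    (hF'' : ∀ t ∈ Set.Ioo (0 : ℝ) 1, HasDerivAt F'
      (2 * ∫ ω, c1Fun lam lam' lam'' lam''' A Y X v gstar
            (pathFun pr prHat t) (pathFun Q0 Q0Hat t) (pathFun Q1 Q1Hat t) ω
          * (prHat (X ω) - pr (X ω)) ^ 2 * (ghat (v (X ω)) - gstar (v (X ω))) ∂P
        + 2 * ∫ ω, c2Fun lam lam' lam'' A X (pathFun pr prHat t) ω
          * (prHat (X ω) - pr (X ω)) * (Q1Hat (X ω) - Q1 (X ω))
          * (ghat (v (X ω)) - gstar (v (X ω))) ∂P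
        + 2 * ∫ ω, c3Fun lam lam' lam'' A X (pathFun pr prHat t) ω
          * (prHat (X ω) - pr (X ω)) * (Q0Hat (X ω) - Q0 (X ω))
          * (ghat (v (X ω)) - gstar (v (X ω))) ∂P) t) :
    ∀ δ₁ δ₂ δ₃ : ℝ, 0 < δ₁ → 0 < δ₂ → 0 < δ₃ → δ₁ + δ₂ + δ₃ < α / 2 →
    ∃ tbar ∈ Set.Ioo (0 : ℝ) 1,
      ∫ ω, (ghat (v (X ω)) - gstar (v (X ω))) ^ 2 ∂P
        ≤ (α / 2 - δ₁ - δ₂ - δ₃)⁻¹ *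
          ((∫ ω, wFun lam lam' A X prHat ω *
              (phiFun lam lam' A Y X prHat Q0Hat Q1Hat ω - ghat (v (X ω))) ^ 2 ∂P
            - ∫ ω, wFun lam lam' A X prHat ω *
              (phiFun lam lam' A Y X prHat Q0Hat Q1Hat ω - gstar (v (X ω))) ^ 2 ∂P)
          + (1 / δ₁) * ∫ ω,
              (c1Fun lam lam' lam'' lam''' A Y X v gstar
                  (pathFun pr prHat tbar) (pathFun Q0 Q0Hat tbar) (pathFun Q1 Q1Hat tbar) ω) ^ 2
                * (prHat (X ω) - pr (X ω)) ^ 4 ∂P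
          + (1 / δ₂) * ∫ ω,
              (c2Fun lam lam' lam'' A X (pathFun pr prHat tbar) ω) ^ 2
                * (prHat (X ω) - pr (X ω)) ^ 2 * (Q1Hat (X ω) - Q1 (X ω)) ^ 2 ∂P
          + (1 / δ₃) * ∫ ω,
              (c3Fun lam lam' lam'' A X (pathFun pr prHat tbar) ω) ^ 2
                * (prHat (X ω) - pr (X ω)) ^ 2 * (Q0Hat (X ω) - Q0 (X ω)) ^ 2 ∂P) := by
  intro δ₁ δ₂ δ₃ hδ₁ hδ₂ hδ₃ hδ
  obtain ⟨t, ht, hTaylor⟩ := exists_taylor_remainder_le zero_lt_one hFcont hF' hF''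
  simp only [sub_zero, mul_one, one_pow] at hTaylor
  have ht' : t ∈ Set.Icc (0 : ℝ) 1 := Set.Ioo_subset_Icc_self ht
  have hF1 := hFdef 1
  simp only [pathFun_one] at hF1
  rw [integral_wFun_mul_phiFun_sub_mul hwhat] at hF1
  have hrisk := integral_mul_sub_sq_sub_integral_mul_sub_sq hIrisk1 hIrisk2 hIcurv
  have hY₁ := two_mul_integral_mul_le hδ₁ (hID1 t ht')
    (by simpa only [mul_pow, ← pow_mul] using hIC1 t ht') hInorm
  have hY₂ := two_mul_integral_mul_le hδ₂ (hID2 t ht')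
    (by simpa only [mul_pow] using hIC2 t ht') hInorm
  have hY₃ := two_mul_integral_mul_le hδ₃ (hID3 t ht')
    (by simpa only [mul_pow] using hIC3 t ht') hInorm
  simp only [mul_pow, ← pow_mul] at hY₁ hY₂ hY₃
  refine ⟨t, ht, (le_inv_mul_iff₀ (by linarith)).2 ?_⟩
  linarith

/-- Theorem 1: oracle error bound for the Neyman-orthogonal weighted
learner.  Under first-order optimality of `g*`, strong convexity (`α`-curvature) of the
weighted risk at the estimated nuisance parameters, and differentiability (under the
integral sign) of the risk-gradient along the nuisance path, the squared `L²(V)`-distance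
between `ĝ` and `g*` is bounded by the excess risk plus higher-order products of
nuisance-estimation errors. -/
theorem stmt19 {Ω 𝓧 𝓥 : Type*} [MeasurableSpace Ω] [StandardBorelSpace Ω]
    [MeasurableSpace 𝓧] [MeasurableSpace 𝓥]
    (P : Measure Ω) [IsProbabilityMeasure P]
    (X : Ω → 𝓧) (hX : Measurable X) (v : 𝓧 → 𝓥) (hv : Measurable v)
    (A Y0 Y1 Y : Ω → ℝ) (hA : Measurable A) (hY0 : Measurable Y0) (hY1 : Measurable Y1)
    (hA01 : ∀ ω, A ω = 0 ∨ A ω = 1)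
    (hYdef : ∀ ω, Y ω = A ω * Y1 ω + (1 - A ω) * Y0 ω)
    (pr : 𝓧 → ℝ) (hprm : Measurable pr) (hpr : ∀ x, 0 < pr x ∧ pr x < 1)
    (hprCE : (fun ω => pr (X ω)) =ᵐ[P] P[A | MeasurableSpace.comap X inferInstance])
    (hCE : CondIndepFun (MeasurableSpace.comap X inferInstance) hX.comap_le
      (fun ω => (Y0 ω, Y1 ω)) A P)
    (Q0 Q1 : 𝓧 → ℝ) (hQ0m : Measurable Q0) (hQ1m : Measurable Q1)
    (hQ1 : P[fun ω => A ω * (Y ω - Q1 (X ω)) | MeasurableSpace.comap X inferInstance]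
      =ᵐ[P] fun _ => (0 : ℝ))
    (hQ0 : P[fun ω => (1 - A ω) * (Y ω - Q0 (X ω)) | MeasurableSpace.comap X inferInstance]
      =ᵐ[P] fun _ => (0 : ℝ))
    -- λ is three times continuously differentiable
    (lam lam' lam'' lam''' : ℝ → ℝ)
    (hlam : ∀ p, HasDerivAt lam (lam' p) p)
    (hlam' : ∀ p, HasDerivAt lam' (lam'' p) p)
    (hlam'' : ∀ p, HasDerivAt lam'' (lam''' p) p)
    (hlam''' : Continuous lam''')
    -- target parameters and estimated nuisance parameters
    (gstar ghat : 𝓥 → ℝ) (hgstar : Measurable gstar) (hghat : Measurable ghat)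
    (prHat Q0Hat Q1Hat : 𝓧 → ℝ)
    (hprHatm : Measurable prHat) (hQ0Hatm : Measurable Q0Hat) (hQ1Hatm : Measurable Q1Hat)
    (hprHat : ∀ x, 0 < prHat x ∧ prHat x < 1)
    -- (a) nondegenerate weights and integrability
    (hwhat : ∀ᵐ ω ∂P, wFun lam lam' A X prHat ω ≠ 0)
    (hw0 : ∀ᵐ ω ∂P, wFun lam lam' A X pr ω ≠ 0)
    (hIrisk1 : Integrable (fun ω => wFun lam lam' A X prHat ω *
      (phiFun lam lam' A Y X prHat Q0Hat Q1Hat ω - ghat (v (X ω))) ^ 2) P)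
    (hIrisk2 : Integrable (fun ω => wFun lam lam' A X prHat ω *
      (phiFun lam lam' A Y X prHat Q0Hat Q1Hat ω - gstar (v (X ω))) ^ 2) P)
    (hInorm : Integrable (fun ω => (ghat (v (X ω)) - gstar (v (X ω))) ^ 2) P)
    (hIcurv : Integrable (fun ω => wFun lam lam' A X prHat ω *
      (ghat (v (X ω)) - gstar (v (X ω))) ^ 2) P)
    (hIC1 : ∀ t ∈ Set.Icc (0 : ℝ) 1, Integrable (fun ω =>
      (c1Fun lam lam' lam'' lam''' A Y X v gstar
          (pathFun pr prHat t) (pathFun Q0 Q0Hat t) (pathFun Q1 Q1Hat t) ω) ^ 2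
        * (prHat (X ω) - pr (X ω)) ^ 4) P)
    (hIC2 : ∀ t ∈ Set.Icc (0 : ℝ) 1, Integrable (fun ω =>
      (c2Fun lam lam' lam'' A X (pathFun pr prHat t) ω) ^ 2
        * (prHat (X ω) - pr (X ω)) ^ 2 * (Q1Hat (X ω) - Q1 (X ω)) ^ 2) P)
    (hIC3 : ∀ t ∈ Set.Icc (0 : ℝ) 1, Integrable (fun ω =>
      (c3Fun lam lam' lam'' A X (pathFun pr prHat t) ω) ^ 2
        * (prHat (X ω) - pr (X ω)) ^ 2 * (Q0Hat (X ω) - Q0 (X ω)) ^ 2) P)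
    (hID1 : ∀ t ∈ Set.Icc (0 : ℝ) 1, Integrable (fun ω =>
      c1Fun lam lam' lam'' lam''' A Y X v gstar
          (pathFun pr prHat t) (pathFun Q0 Q0Hat t) (pathFun Q1 Q1Hat t) ω
        * (prHat (X ω) - pr (X ω)) ^ 2 * (ghat (v (X ω)) - gstar (v (X ω)))) P)
    (hID2 : ∀ t ∈ Set.Icc (0 : ℝ) 1, Integrable (fun ω =>
      c2Fun lam lam' lam'' A X (pathFun pr prHat t) ω
        * (prHat (X ω) - pr (X ω)) * (Q1Hat (X ω) - Q1 (X ω))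
        * (ghat (v (X ω)) - gstar (v (X ω)))) P)
    (hID3 : ∀ t ∈ Set.Icc (0 : ℝ) 1, Integrable (fun ω =>
      c3Fun lam lam' lam'' A X (pathFun pr prHat t) ω
        * (prHat (X ω) - pr (X ω)) * (Q0Hat (X ω) - Q0 (X ω))
        * (ghat (v (X ω)) - gstar (v (X ω)))) P)
    -- the (−1/2 times) directional derivative of the risk in `g` along the nuisance path
    (F F' : ℝ → ℝ)
    (hFdef : ∀ t : ℝ, F t = ∫ ω,
      (lam (pathFun pr prHat t (X ω)) *
          (A ω / pathFun pr prHat t (X ω) * (Y ω - pathFun Q1 Q1Hat t (X ω))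
            - (1 - A ω) / (1 - pathFun pr prHat t (X ω)) * (Y ω - pathFun Q0 Q0Hat t (X ω)))
        + wFun lam lam' A X (pathFun pr prHat t) ω *
          (pathFun Q1 Q1Hat t (X ω) - pathFun Q0 Q0Hat t (X ω) - gstar (v (X ω))))
        * (ghat (v (X ω)) - gstar (v (X ω))) ∂P)
    -- (b) first-order optimality of g* at the true nuisance parameters
    (hF0 : F 0 ≤ 0)
    -- (c) curvature
    (α : ℝ) (hα : 0 ≤ α)
    (hcurv : α / 2 * ∫ ω, (ghat (v (X ω)) - gstar (v (X ω))) ^ 2 ∂P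
      ≤ ∫ ω, wFun lam lam' A X prHat ω * (ghat (v (X ω)) - gstar (v (X ω))) ^ 2 ∂P)
    -- (d) smoothness of F with F'(0) = 0 and second derivative given by
    -- differentiation under the integral sign
    (hFcont : ContinuousOn F (Set.Icc 0 1))
    (hF' : ∀ t ∈ Set.Ico (0 : ℝ) 1, HasDerivWithinAt F (F' t) (Set.Ici t) t)
    (hF'0 : F' 0 = 0)
    (hF'' : ∀ t ∈ Set.Ioo (0 : ℝ) 1, HasDerivAt F'
      (2 * ∫ ω, c1Fun lam lam' lam'' lam''' A Y X v gstar
            (pathFun pr prHat t) (pathFun Q0 Q0Hat t) (pathFun Q1 Q1Hat t) ω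
          * (prHat (X ω) - pr (X ω)) ^ 2 * (ghat (v (X ω)) - gstar (v (X ω))) ∂P
        + 2 * ∫ ω, c2Fun lam lam' lam'' A X (pathFun pr prHat t) ω
          * (prHat (X ω) - pr (X ω)) * (Q1Hat (X ω) - Q1 (X ω))
          * (ghat (v (X ω)) - gstar (v (X ω))) ∂P
        + 2 * ∫ ω, c3Fun lam lam' lam'' A X (pathFun pr prHat t) ω
          * (prHat (X ω) - pr (X ω)) * (Q0Hat (X ω) - Q0 (X ω))
          * (ghat (v (X ω)) - gstar (v (X ω))) ∂P) t) :
    ∀ δ₁ δ₂ δ₃ : ℝ, 0 < δ₁ → 0 < δ₂ → 0 < δ₃ → δ₁ + δ₂ + δ₃ < α / 2 →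
    ∃ tbar ∈ Set.Ioo (0 : ℝ) 1,
      ∫ ω, (ghat (v (X ω)) - gstar (v (X ω))) ^ 2 ∂P
        ≤ (α / 2 - δ₁ - δ₂ - δ₃)⁻¹ *
          ((∫ ω, wFun lam lam' A X prHat ω *
              (phiFun lam lam' A Y X prHat Q0Hat Q1Hat ω - ghat (v (X ω))) ^ 2 ∂P
            - ∫ ω, wFun lam lam' A X prHat ω *
              (phiFun lam lam' A Y X prHat Q0Hat Q1Hat ω - gstar (v (X ω))) ^ 2 ∂P)
          + (1 / δ₁) * ∫ ω,
              (c1Fun lam lam' lam'' lam''' A Y X v gstar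
                  (pathFun pr prHat tbar) (pathFun Q0 Q0Hat tbar) (pathFun Q1 Q1Hat tbar) ω) ^ 2
                * (prHat (X ω) - pr (X ω)) ^ 4 ∂P
          + (1 / δ₂) * ∫ ω,
              (c2Fun lam lam' lam'' A X (pathFun pr prHat tbar) ω) ^ 2
                * (prHat (X ω) - pr (X ω)) ^ 2 * (Q1Hat (X ω) - Q1 (X ω)) ^ 2 ∂P
          + (1 / δ₃) * ∫ ω,
              (c3Fun lam lam' lam'' A X (pathFun pr prHat tbar) ω) ^ 2
                * (prHat (X ω) - pr (X ω)) ^ 2 * (Q0Hat (X ω) - Q0 (X ω)) ^ 2 ∂P) :=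
  stmt19_general P X v A Y pr Q0 Q1 lam lam' lam'' lam''' gstar ghat prHat Q0Hat Q1Hat hwhat hIrisk1
    hIrisk2 hInorm hIcurv hIC1 hIC2 hIC3 hID1 hID2 hID3 F F' hFdef hF0 α hcurv hFcont hF' hF'0 hF''
end
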